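/- arXiv:1207.1258 — 3 statements merged into one kernel-verified Lean document; each statement's English description precedes it below -/
import Mathlib

section
/- Let F be a differential field, h ∈ F, and M₂ = f gᵀ with f, g ∈ Fⁿ satisfying fᵀg = f'ᵀg = 0. Then M = h·I + M₂ commutes with its derivative M'. -/
/-!
Write `M = h • 1 + A` with `A = f gᵀ`; entrywise, `M' = h' • 1 + B` with `B = f' gᵀ + f g'ᵀ`.
Scalar matrices are central, so it suffices that `A B = B A = 0`. A product of rank-one matrices
`(u vᵀ) (w xᵀ)` is `(v ⬝ w) u xᵀ`, and the dot products involved, `f ⬝ g`, `f' ⬝ g` and `f ⬝ g'`,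
all vanish: the last because differentiating `f ⬝ g = 0` gives `f' ⬝ g + f ⬝ g' = 0`.
-/

def IsDeriv {F : Type*} [Field F] (d : F → F) : Prop :=
  (∀ a b, d (a + b) = d a + d b) ∧ (∀ a b, d (a * b) = d a * b + a * d b)

open Matrix

def IsDeriv.toDerivation {F : Type*} [Field F] {d : F → F} (hd : IsDeriv d) :
    Derivation ℤ F F :=
  .mk' (AddMonoidHom.mk' d hd.1).toIntLinearMap fun a b => by
    simp only [AddMonoidHom.coe_toIntLinearMap, AddMonoidHom.mk'_apply, hd.2, smul_eq_mul]
    ring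

@[simp]
theorem IsDeriv.coe_toDerivation {F : Type*} [Field F] {d : F → F} (hd : IsDeriv d) :
    ⇑hd.toDerivation = d :=
  rfl

namespace Derivation

variable {R A : Type*} [CommSemiring R] [CommSemiring A] [Algebra R A] (D : Derivation R A A)
  {m : Type*}

theorem map_dotProduct [Fintype m] (v w : m → A) :
    D (v ⬝ᵥ w) = (D ∘ v) ⬝ᵥ w + v ⬝ᵥ (D ∘ w) := by
  simp only [dotProduct, map_sum, leibniz, smul_eq_mul, Function.comp_apply,
    ← Finset.sum_add_distrib]
  exact Finset.sum_congr rfl fun i _ => by ring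

theorem map_vecMulVec {n : Type*} (v : m → A) (w : n → A) :
    (vecMulVec v w).map D = vecMulVec (D ∘ v) w + vecMulVec v (D ∘ w) := by
  ext i j
  simp only [map_apply, vecMulVec_apply, leibniz, smul_eq_mul, Matrix.add_apply,
    Function.comp_apply]
  ring

theorem map_smul_one [DecidableEq m] (a : A) :
    (a • 1 : Matrix m m A).map D = D a • 1 := by
  rw [smul_one_eq_diagonal, smul_one_eq_diagonal, diagonal_map (map_zero D)]

end Derivation

theorem Commute.smul_one_add_smul_one_add {R A : Type*} [CommSemiring R] [Semiring A]
    [Algebra R A] {x y : A} (h : Commute x y) (r s : R) :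
    Commute (r • 1 + x) (s • 1 + y) :=
  (((Commute.one_left _).smul_left r).smul_right s |>.add_right
    ((Commute.one_left y).smul_left r)).add_left
    (((Commute.one_right x).smul_right s).add_right h)

theorem Matrix.vecMulVec_mul_vecMulVec_of_dotProduct_eq_zero {α l m n : Type*} [CommSemiring α]
    [Fintype m] (u : l → α) {v w : m → α} (x : n → α) (h : v ⬝ᵥ w = 0) :
    vecMulVec u v * vecMulVec w x = 0 := by
  ext
  simp [vecMulVec_mul_vecMulVec, h, vecMulVec_apply]

theorem Matrix.commute_vecMulVec_of_dotProduct_eq_zero {α m : Type*} [CommSemiring α] [Fintype m]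
    {u v u' v' : m → α} (h : u ⬝ᵥ v = 0) (h' : u' ⬝ᵥ v = 0) (h'' : u ⬝ᵥ v' = 0) :
    Commute (vecMulVec u v) (vecMulVec u' v + vecMulVec u v') := by
  rw [dotProduct_comm] at h h' h''
  have hleft : vecMulVec u v * (vecMulVec u' v + vecMulVec u v') = 0 := by
    rw [mul_add, vecMulVec_mul_vecMulVec_of_dotProduct_eq_zero _ _ h',
      vecMulVec_mul_vecMulVec_of_dotProduct_eq_zero _ _ h, add_zero]
  have hright : (vecMulVec u' v + vecMulVec u v') * vecMulVec u v = 0 := by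
    rw [add_mul, vecMulVec_mul_vecMulVec_of_dotProduct_eq_zero _ _ h,
      vecMulVec_mul_vecMulVec_of_dotProduct_eq_zero _ _ h'', add_zero]
  exact hleft.trans hright.symm

/-- A Type 3 matrix `M = h·I + f gᵀ` (with `fᵀg = f'ᵀg = 0`) commutes with its
entrywise derivative. -/
theorem type3_commutes_with_derivative {F : Type*} [Field F] (d : F → F) (hd : IsDeriv d)
    {n : ℕ} (h : F) (f g : Fin n → F)
    (h1 : ∑ i, f i * g i = 0)
    (h2 : ∑ i, d (f i) * g i = 0)
    (M : Matrix (Fin n) (Fin n) F)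
    (hM : M = h • (1 : Matrix (Fin n) (Fin n) F) + Matrix.of fun i j => f i * g j) :
    M * M.map d = M.map d * M := by
  set D := hd.toDerivation
  have hfg : f ⬝ᵥ g = 0 := h1
  have hf'g : (D ∘ f) ⬝ᵥ g = 0 := h2
  have hfg' : f ⬝ᵥ (D ∘ g) = 0 := by
    simpa [hfg, hf'g] using (D.map_dotProduct f g).symm
  have hMd : M.map d = d h • 1 + (vecMulVec (D ∘ f) g + vecMulVec f (D ∘ g)) := by
    rw [hM, ← hd.coe_toDerivation, Matrix.map_add D (map_add D), D.map_smul_one]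
    exact congrArg _ (D.map_vecMulVec f g)
  rw [hMd, hM]
  exact ((commute_vecMulVec_of_dotProduct_eq_zero hfg hf'g hfg').smul_one_add_smul_one_add h
    (d h)).eq
end

section
/- Let F be a differential field with constants K. If M ∈ F^{n×n} satisfies M M' = M' M and M is diagonalizable by a similarity over F, then M is diagonalizable by a similarity with an invertible constant matrix T ∈ K^{n×n}. -/
/-!
Write `X'` for `X.map d`, and let `e i` be the spectral idempotents of `M`, so that
`M * e i = e i * M = μ i • e i` with distinct eigenvalues `μ i`. Since `M` commutes with `M'`,
comparing `μ i` and `μ j` gives `e i * M' * e j = 0` for `i ≠ j`; differentiating the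
eigen-equations then gives `e j * (e i)' = (e i)' * e j = 0` for `j ≠ i`. As `∑ j, e j = 1`,
this means `(e i)' = e i * (e i)' = (e i)' * e i`, and differentiating `e i * e i = e i` yields
`(e i)' = 2 • (e i)'`, i.e. `(e i)' = 0`. So the `e i` have constant entries; their fixed
vectors in `Kⁿ` span `Kⁿ`, and a basis of such vectors is the constant matrix `T`.
-/

universe u

namespace IsDeriv

variable {F : Type*} [Field F] {d : F → F}

def toAddMonoidHom (hd : IsDeriv d) : F →+ F := AddMonoidHom.mk' d hd.1

theorem map_zero (hd : IsDeriv d) : d 0 = 0 := hd.toAddMonoidHom.map_zero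

theorem map_neg (hd : IsDeriv d) (a : F) : d (-a) = -d a := hd.toAddMonoidHom.map_neg a

theorem map_one (hd : IsDeriv d) : d 1 = 0 := by
  simpa using hd.2 1 1

theorem map_inv_eq_zero (hd : IsDeriv d) {a : F} (ha : d a = 0) : d a⁻¹ = 0 := by
  rcases eq_or_ne a 0 with rfl | h0
  · rw [_root_.inv_zero, hd.map_zero]
  · have h := hd.2 a a⁻¹
    rw [mul_inv_cancel₀ h0, hd.map_one, ha, zero_mul, zero_add] at h
    exact (mul_eq_zero.mp h.symm).resolve_left h0

def constants (hd : IsDeriv d) : Subfield F where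
  carrier := {a | d a = 0}
  mul_mem' {a b} ha hb := by simp_all [hd.2 a b]
  one_mem' := hd.map_one
  add_mem' {a b} ha hb := by simp_all [hd.1 a b]
  zero_mem' := hd.map_zero
  neg_mem' {a} ha := by simp_all [hd.map_neg a]
  inv_mem' _ := hd.map_inv_eq_zero

theorem matrix_map_mul {l m n : Type*} [Fintype m] (hd : IsDeriv d) (A : Matrix l m F)
    (B : Matrix m n F) : (A * B).map d = A.map d * B + A * B.map d := by
  ext i j
  simp only [Matrix.map_apply, Matrix.mul_apply, Matrix.add_apply, ← Finset.sum_add_distrib,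
    ← hd.2]
  exact map_sum hd.toAddMonoidHom _ _

theorem matrix_map_smul {m n : Type*} (hd : IsDeriv d) (c : F) (A : Matrix m n F) :
    (c • A).map d = d c • A + c • A.map d := by
  ext i j
  exact hd.2 c (A i j)

end IsDeriv

namespace Matrix

theorem isDiag_inv_mul_mul_of_mulVec_col_eq_smul {R ι : Type*} [CommRing R] [Fintype ι]
    [DecidableEq ι] {M T : Matrix ι ι R} (hT : IsUnit T) (μ : ι → R)
    (h : ∀ j, M *ᵥ T.col j = μ j • T.col j) : (T⁻¹ * M * T).IsDiag := by
  have hMT : M * T = T * diagonal μ := by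
    ext i j
    rw [mul_diagonal, mul_comm]
    simpa [mul_apply, mulVec, dotProduct] using congrFun (h j) i
  rw [Matrix.mul_assoc, hMT, nonsing_inv_mul_cancel_left _ _ ((isUnit_iff_isUnit_det T).mp hT)]
  exact isDiag_diagonal μ

theorem exists_isUnit_col_mem_of_span_eq_top {K ι : Type*} [Field K] [Fintype ι] [DecidableEq ι]
    {s : Set (ι → K)} (hs : Submodule.span K s = ⊤) :
    ∃ T : Matrix ι ι K, IsUnit T ∧ ∀ j, T.col j ∈ s := by
  obtain ⟨b, hbs, hspan, hli⟩ := exists_linearIndependent K s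
  let basis := Module.Basis.mk hli (by simp [hspan, hs])
  have : Fintype b := FiniteDimensional.fintypeBasisIndex basis
  let e : ι ≃ b := Fintype.equivOfCardEq <| by
    rw [← Module.finrank_eq_card_basis basis, Module.finrank_fintype_fun_eq_card]
  refine ⟨of fun i j => (e j : ι → K) i, ?_, fun j => hbs (e j).2⟩
  rw [← linearIndependent_cols_iff_isUnit]
  exact hli.comp e e.injective

theorem _root_.CompleteOrthogonalIdempotents.span_fixed_eq_top {R ι I : Type*} [CommSemiring R]
    [Fintype ι] [DecidableEq ι] [Fintype I] {e : I → Matrix ι ι R}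
    (he : CompleteOrthogonalIdempotents e) :
    Submodule.span R {v | ∃ i, e i *ᵥ v = v} = ⊤ := by
  refine Submodule.eq_top_iff'.mpr fun v => ?_
  have hv : v = ∑ i, e i *ᵥ v := by rw [← sum_mulVec, he.complete, one_mulVec]
  rw [hv]
  exact Submodule.sum_mem _ fun i _ =>
    Submodule.subset_span ⟨i, by rw [mulVec_mulVec, (he.idem i).eq]⟩

theorem _root_.CompleteOrthogonalIdempotents.exists_isUnit_mulVec_col_eq_of_mem_subfield
    {F ι I : Type*} [Field F] [Fintype ι] [DecidableEq ι] [Fintype I] {K : Subfield F}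
    {e : I → Matrix ι ι F} (he : CompleteOrthogonalIdempotents e) (heK : ∀ i p q, e i p q ∈ K) :
    ∃ T : Matrix ι ι F, IsUnit T ∧ (∀ p q, T p q ∈ K) ∧ ∀ j, ∃ i, e i *ᵥ T.col j = T.col j := by
  have he_lift (i : I) : ∃ Q : Matrix ι ι K, K.subtype.mapMatrix Q = e i :=
    ⟨of fun p q => ⟨e i p q, heK i p q⟩, rfl⟩
  choose Q hQ using he_lift
  have hQ_coi : CompleteOrthogonalIdempotents Q := by
    rw [← CompleteOrthogonalIdempotents.map_injective_iff K.subtype.mapMatrix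
      (map_injective Subtype.val_injective)]
    convert he
    exact funext hQ
  obtain ⟨T, hT, hT_col⟩ := exists_isUnit_col_mem_of_span_eq_top hQ_coi.span_fixed_eq_top
  refine ⟨K.subtype.mapMatrix T, hT.map _, fun p q => (T p q).2, fun j => ?_⟩
  obtain ⟨i, hi⟩ := hT_col j
  refine ⟨i, funext fun p => ?_⟩
  rw [← hQ]
  exact (RingHom.map_mulVec K.subtype _ _ p).symm.trans (congrArg _ (congrFun hi p))

variable {F : Type u} {ι I : Type*} [Field F] [Fintype ι] [DecidableEq ι] [Fintype I]

structure IsSpectralDecomposition (M : Matrix ι ι F) (e : I → Matrix ι ι F) (μ : I → F) : Prop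
    extends CompleteOrthogonalIdempotents e where
  injective : Function.Injective μ
  mul_idem : ∀ i, M * e i = μ i • e i
  idem_mul : ∀ i, e i * M = μ i • e i

theorem exists_isSpectralDecomposition {S M : Matrix ι ι F} (hS : IsUnit S)
    (hSM : (S⁻¹ * M * S).IsDiag) :
    ∃ (I : Type u) (_ : Fintype I) (e : I → Matrix ι ι F) (μ : I → F),
      IsSpectralDecomposition M e μ := by
  classical
  let δ := (S⁻¹ * M * S).diag
  let f := Set.rangeFactorization δ
  let conj := MulSemiringAction.toAlgEquiv F (Matrix ι ι F) (ConjAct.toConjAct hS.unit)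
  -- `ψ x = S * diagonal (x ∘ f) * S⁻¹`, where `f k = δ k` as an element of `Set.range δ`
  let ψ : (Set.range δ → F) →ₐ[F] Matrix ι ι F :=
    conj.toAlgHom.comp ((diagonalAlgHom F).comp (AlgHom.pi fun k => Pi.evalAlgHom F _ (f k)))
  have hM : ψ Subtype.val = M := by
    have hD : diagonal (fun k => (f k : F)) = S⁻¹ * M * S := hSM.diagonal_diag
    have hSdet := (isUnit_iff_isUnit_det S).mp hS
    change ConjAct.toConjAct hS.unit • diagonal (fun k => (f k : F)) = M
    rw [ConjAct.units_smul_def, coe_units_inv, ConjAct.ofConjAct_toConjAct, IsUnit.unit_spec, hD,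
      Matrix.mul_assoc, mul_nonsing_inv_cancel_right _ _ hSdet,
      mul_nonsing_inv_cancel_left _ _ hSdet]
  have hcoi := (CompleteOrthogonalIdempotents.single fun _ : Set.range δ => F).map ψ.toRingHom
  have hmul (c : Set.range δ) :
      (Subtype.val : Set.range δ → F) * Pi.single c 1 = c.1 • Pi.single c 1 := by
    ext c'
    by_cases h : c' = c <;> simp [h]
  refine ⟨Set.range δ, inferInstance, fun c => ψ (Pi.single c 1), Subtype.val,
    { hcoi with
      injective := Subtype.val_injective
      mul_idem := fun c => ?_
      idem_mul := fun c => ?_ }⟩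
  · rw [← hM, ← map_mul, hmul, map_smul]
  · rw [← hM, ← map_mul, mul_comm, hmul, map_smul]

namespace IsSpectralDecomposition

variable {M : Matrix ι ι F} {e : I → Matrix ι ι F} {μ : I → F} {d : F → F}

theorem mulVec_eq_smul (h : IsSpectralDecomposition M e μ) {i : I} {v : ι → F}
    (hv : e i *ᵥ v = v) : M *ᵥ v = μ i • v := by
  rw [← hv, mulVec_mulVec, h.mul_idem, smul_mulVec]

theorem eq_zero_of_smul_eq_smul (h : IsSpectralDecomposition M e μ) {i j : I} (hij : i ≠ j)
    {X : Matrix ι ι F} (hX : μ i • X = μ j • X) : X = 0 :=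
  of_not_not fun hX0 => h.injective.ne hij (smul_left_injective F hX0 hX)

theorem idem_mul_map_mul_idem_eq_zero (h : IsSpectralDecomposition M e μ)
    (hcomm : M * M.map d = M.map d * M) {i j : I} (hij : i ≠ j) :
    e i * M.map d * e j = 0 := by
  refine h.eq_zero_of_smul_eq_smul hij ?_
  calc μ i • (e i * M.map d * e j) = e i * M * M.map d * e j := by
        rw [h.idem_mul, Matrix.smul_mul, Matrix.smul_mul]
    _ = e i * M.map d * (M * e j) := by
        rw [Matrix.mul_assoc (e i) M, hcomm]
        simp only [Matrix.mul_assoc]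
    _ = μ j • (e i * M.map d * e j) := by rw [h.mul_idem, Matrix.mul_smul]

theorem idem_mul_map_idem_eq_zero (hd : IsDeriv d) (h : IsSpectralDecomposition M e μ)
    (hcomm : M * M.map d = M.map d * M) {i j : I} (hij : i ≠ j) :
    e j * (e i).map d = 0 := by
  have hderiv : M.map d * e i + M * (e i).map d = d (μ i) • e i + μ i • (e i).map d := by
    rw [← hd.matrix_map_mul, ← hd.matrix_map_smul, h.mul_idem]
  have := congrArg (e j * ·) hderiv
  simp only [Matrix.mul_add, Matrix.mul_smul, ← Matrix.mul_assoc, h.idem_mul,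
    h.idem_mul_map_mul_idem_eq_zero hcomm hij.symm, h.ortho hij.symm, smul_zero, zero_add,
    Matrix.smul_mul] at this
  exact h.eq_zero_of_smul_eq_smul hij.symm this

theorem map_idem_mul_idem_eq_zero (hd : IsDeriv d) (h : IsSpectralDecomposition M e μ)
    (hcomm : M * M.map d = M.map d * M) {i j : I} (hij : i ≠ j) :
    (e i).map d * e j = 0 := by
  have hderiv : (e i).map d * M + e i * M.map d = d (μ i) • e i + μ i • (e i).map d := by
    rw [← hd.matrix_map_mul, ← hd.matrix_map_smul, h.idem_mul]
  have := congrArg (· * e j) hderiv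
  simp only [Matrix.add_mul, Matrix.smul_mul, Matrix.mul_assoc ((e i).map d), h.mul_idem,
    Matrix.mul_smul, h.idem_mul_map_mul_idem_eq_zero hcomm hij, h.ortho hij, smul_zero,
    add_zero, zero_add] at this
  exact h.eq_zero_of_smul_eq_smul hij.symm this

theorem map_idem_eq_zero (hd : IsDeriv d) (h : IsSpectralDecomposition M e μ)
    (hcomm : M * M.map d = M.map d * M) (i : I) : (e i).map d = 0 := by
  have hleft : e i * (e i).map d = (e i).map d := by
    calc e i * (e i).map d = ∑ j, e j * (e i).map d :=
          (Fintype.sum_eq_single i fun j hj => h.idem_mul_map_idem_eq_zero hd hcomm hj.symm).symm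
      _ = (e i).map d := by rw [← Finset.sum_mul, h.complete, Matrix.one_mul]
  have hright : (e i).map d * e i = (e i).map d := by
    calc (e i).map d * e i = ∑ j, (e i).map d * e j :=
          (Fintype.sum_eq_single i fun j hj => h.map_idem_mul_idem_eq_zero hd hcomm hj.symm).symm
      _ = (e i).map d := by rw [← Finset.mul_sum, h.complete, Matrix.mul_one]
  have hsq := hd.matrix_map_mul (e i) (e i)
  rw [(h.idem i).eq, hright, hleft] at hsq
  exact left_eq_add.mp hsq

end IsSpectralDecomposition

end Matrix

/-- If `M M' = M' M` and `M` is diagonalizable over `F`, then `M` is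
diagonalizable by an invertible matrix with constant entries. -/
theorem diagonalizable_implies_constant_diagonalizable {F : Type*} [Field F]
    (d : F → F) (hd : IsDeriv d)
    {n : ℕ} (M : Matrix (Fin n) (Fin n) F)
    (hcomm : M * M.map d = M.map d * M)
    (hdiag : ∃ S : Matrix (Fin n) (Fin n) F, IsUnit S ∧ (S⁻¹ * M * S).IsDiag) :
    ∃ T : Matrix (Fin n) (Fin n) F, IsUnit T ∧ (∀ p q, d (T p q) = 0) ∧
      (T⁻¹ * M * T).IsDiag := by
  obtain ⟨S, hS, hSM⟩ := hdiag
  obtain ⟨I, _, e, μ, he⟩ := Matrix.exists_isSpectralDecomposition hS hSM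
  have he_const (i : I) (p q : Fin n) : e i p q ∈ hd.constants :=
    congrFun₂ (he.map_idem_eq_zero hd hcomm i) p q
  obtain ⟨T, hT, hT_const, hT_col⟩ :=
    he.exists_isUnit_mulVec_col_eq_of_mem_subfield he_const
  choose ν hν using hT_col
  exact ⟨T, hT, hT_const, Matrix.isDiag_inv_mul_mul_of_mulVec_col_eq_smul hT (μ ∘ ν)
    fun j => he.mulVec_eq_smul (hν j)⟩
end

section
/- Let F be a differential field whose field of constants K is algebraically closed. Every M ∈ F^{2×2} with M M' = M' M is of Type 1. -/
/-- `M` is of Type 1: an `F`-linear combination of pairwise commuting matrices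
with constant entries. -/
def IsType1 {F : Type*} [Field F] (d : F → F) {n : ℕ}
    (M : Matrix (Fin n) (Fin n) F) : Prop :=
  ∃ (k : ℕ) (f : Fin k → F) (C : Fin k → Matrix (Fin n) (Fin n) F),
    (∀ j p q, d (C j p q) = 0) ∧
    (∀ i j, C i * C j = C j * C i) ∧
    M = ∑ j, f j • C j

/-!
Write `M = a • 1 + N` with `N = !![0, b; c, u]`. Since scalars commute with everything,
`[M, M'] = [N, N']`, and its entries are the Wronskians `b c' - c b'`, `b u' - u b'`,
`c u' - u c'`. Pairwise vanishing Wronskians make `(b, c, u) = g • w` with `w` constant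
(divide by a nonzero entry `g`), so `M = a • 1 + g • C` with `C` a constant matrix.
-/

section

variable {F : Type*} [Field F] {d : F → F}

theorem IsDeriv.map_zero_s16 (hd : IsDeriv d) : d 0 = 0 := by
  have h : d 0 = d 0 + d 0 := by simpa using (hd.1 0 0).symm
  linear_combination -h

theorem IsDeriv.map_one_s16 (hd : IsDeriv d) : d 1 = 0 := by
  have h : d 1 = d 1 + d 1 := by simpa using hd.2 1 1
  linear_combination -h

theorem IsDeriv.map_sub (hd : IsDeriv d) (x y : F) : d (x - y) = d x - d y := by
  have h := hd.1 (x - y) y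
  rw [sub_add_cancel] at h
  linear_combination -h

theorem IsDeriv.map_div_eq_zero (hd : IsDeriv d) {g x : F} (hg : g ≠ 0)
    (h : g * d x = x * d g) : d (x / g) = 0 := by
  have hmul := hd.2 (x / g) g
  rw [div_mul_cancel₀ x hg] at hmul
  have : d (x / g) * g ^ 2 = 0 := by
    field_simp at hmul
    linear_combination h - hmul
  exact (mul_eq_zero.mp this).resolve_right (pow_ne_zero 2 hg)

theorem IsDeriv.exists_smul_of_wronskian_eq_zero (hd : IsDeriv d) {ι : Type*} (v : ι → F)
    (hv : ∀ i j, v i * d (v j) = v j * d (v i)) :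
    ∃ (g : F) (w : ι → F), (∀ i, d (w i) = 0) ∧ v = g • w := by
  by_cases hzero : v = 0
  · exact ⟨0, 0, fun _ => hd.map_zero_s16, by simp [hzero]⟩
  obtain ⟨i, hi⟩ := Function.ne_iff.mp hzero
  refine ⟨v i, fun j => v j / v i, fun j => hd.map_div_eq_zero hi (hv i j), ?_⟩
  ext j
  simp [mul_div_cancel₀ _ hi]

theorem isType1_smul_one_add_smul (hd : IsDeriv d) {n : ℕ} (a g : F)
    (C : Matrix (Fin n) (Fin n) F) (hC : ∀ p q, d (C p q) = 0) :
    IsType1 d (a • 1 + g • C) := by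
  refine ⟨2, ![a, g], ![1, C], ?_, ?_, ?_⟩
  · intro j p q
    fin_cases j
    · by_cases hpq : p = q <;> simp [hpq, hd.map_zero_s16, hd.map_one_s16]
    · exact hC p q
  · intro i j
    fin_cases i <;> fin_cases j <;> simp
  · simp [Fin.sum_univ_two]

/-- The entries of `M - M 0 0 • 1` other than its zero corner. -/
def nonscalarCoords (M : Matrix (Fin 2) (Fin 2) F) : Fin 3 → F :=
  ![M 0 1, M 1 0, M 1 1 - M 0 0]

theorem wronskian_nonscalarCoords_eq_zero (hd : IsDeriv d) (M : Matrix (Fin 2) (Fin 2) F)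
    (hcomm : M * M.map d = M.map d * M) (i j : Fin 3) :
    nonscalarCoords M i * d (nonscalarCoords M j) =
      nonscalarCoords M j * d (nonscalarCoords M i) := by
  have h00 := congr_fun (congr_fun hcomm 0) 0
  have h01 := congr_fun (congr_fun hcomm 0) 1
  have h10 := congr_fun (congr_fun hcomm 1) 0
  simp only [Matrix.mul_apply, Matrix.map_apply, Fin.sum_univ_two] at h00 h01 h10
  have hbc : M 0 1 * d (M 1 0) = M 1 0 * d (M 0 1) := by linear_combination h00
  have hbu : M 0 1 * d (M 1 1 - M 0 0) = (M 1 1 - M 0 0) * d (M 0 1) := by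
    rw [hd.map_sub]; linear_combination h01
  have hcu : M 1 0 * d (M 1 1 - M 0 0) = (M 1 1 - M 0 0) * d (M 1 0) := by
    rw [hd.map_sub]; linear_combination -h10
  fin_cases i <;> fin_cases j <;> simp [nonscalarCoords] <;> grind

theorem eq_smul_one_add_smul_of_nonscalarCoords_eq (M : Matrix (Fin 2) (Fin 2) F) (g : F)
    (w : Fin 3 → F) (h : nonscalarCoords M = g • w) :
    M = M 0 0 • 1 + g • !![0, w 0; w 1, w 2] := by
  have h0 := congr_fun h 0
  have h1 := congr_fun h 1
  have h2 := congr_fun h 2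
  simp only [nonscalarCoords, Matrix.cons_val, Pi.smul_apply, smul_eq_mul] at h0 h1 h2
  ext p q
  fin_cases p <;> fin_cases q <;> simp [← h0, ← h1, ← h2]

end

theorem two_by_two_type1_general {F : Type*} [Field F]
    (d : F → F) (hd : IsDeriv d)
    (M : Matrix (Fin 2) (Fin 2) F)
    (hcomm : M * M.map d = M.map d * M) :
    IsType1 d M := by
  obtain ⟨g, w, hw, hv⟩ :=
    hd.exists_smul_of_wronskian_eq_zero _ (wronskian_nonscalarCoords_eq_zero hd M hcomm)
  rw [eq_smul_one_add_smul_of_nonscalarCoords_eq M g w hv]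
  refine isType1_smul_one_add_smul hd _ _ _ fun p q => ?_
  fin_cases p <;> fin_cases q <;> simp [hw, hd.map_zero_s16]

/-- Over a differential field with algebraically closed field of constants,
every `2×2` matrix commuting with its derivative is of Type 1. -/
theorem two_by_two_type1 {F : Type*} [Field F]
    (d : F → F) (hd : IsDeriv d)
    (K : Subfield F) (hK : ∀ x, x ∈ K ↔ d x = 0) (hKalg : IsAlgClosed K)
    (M : Matrix (Fin 2) (Fin 2) F)
    (hcomm : M * M.map d = M.map d * M) :
    IsType1 d M :=
  two_by_two_type1_general d hd M hcomm
end
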